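/- Let s > 0 be real and let ζ be a real number with |ζ| < 1. Then the integral ∫₀^∞ t^{s−1} e^{−t} / (1 − ζ² e^{−2t}) dt converges and χ_s(ζ) = (ζ/Γ(s)) ∫₀^∞ t^{s−1} e^{−t} / (1 − ζ² e^{−2t}) dt. -/

import Mathlib

open MeasureTheory Set

/-- The Legendre chi function `χ_s(ζ) = ∑_{r=0}^∞ ζ^{2r+1} / (2r+1)^s`. -/
noncomputable def legendreChi (s ζ : ℝ) : ℝ :=
  ∑' r : ℕ, ζ ^ (2 * r + 1) / ((2 * (r : ℝ) + 1) ^ s)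

/-- Integral representation of the Legendre chi function:
`χ_s(ζ) = (ζ/Γ(s)) ∫₀^∞ t^{s-1} e^{-t} / (1 - ζ² e^{-2t}) dt`. -/
theorem legendreChi_integral_rep (s : ℝ) (hs : 0 < s) (ζ : ℝ) (hζ : |ζ| < 1) :
    IntegrableOn
        (fun t : ℝ => t ^ (s - 1) * Real.exp (-t) / (1 - ζ ^ 2 * Real.exp (-2 * t)))
        (Ioi 0) ∧
      legendreChi s ζ =
        (ζ / Real.Gamma s) *
          ∫ t in Ioi (0 : ℝ),
            t ^ (s - 1) * Real.exp (-t) / (1 - ζ ^ 2 * Real.exp (-2 * t)) := by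
  have hζ2 : ζ ^ 2 < 1 := by
    have := abs_nonneg ζ
    nlinarith [sq_abs ζ]
  have hζ2n : (0:ℝ) ≤ ζ ^ 2 := sq_nonneg ζ
  have hΓpos : 0 < Real.Gamma s := Real.Gamma_pos_of_pos hs
  -- the base Gamma-type integrable function
  have hbase : IntegrableOn (fun t : ℝ => Real.exp (-t) * t ^ (s - 1)) (Ioi 0) :=
    Real.GammaIntegral_convergent hs
  -- denominator bounds
  have hden : ∀ t : ℝ, t ∈ Ioi (0:ℝ) → ζ ^ 2 * Real.exp (-2 * t) < 1 := by
    intro t ht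
    have ht0 : (0:ℝ) < t := ht
    have h1 : Real.exp (-2 * t) < 1 := Real.exp_lt_one_iff.mpr (by linarith)
    nlinarith [Real.exp_pos (-2 * t)]
  have hdenle : ∀ t : ℝ, t ∈ Ioi (0:ℝ) → 1 - ζ ^ 2 ≤ 1 - ζ ^ 2 * Real.exp (-2 * t) := by
    intro t ht
    have ht0 : (0:ℝ) < t := ht
    have h1 : Real.exp (-2 * t) ≤ 1 := Real.exp_le_one_iff.mpr (by linarith)
    nlinarith
  -- measurability of the target
  have hmeas : AEStronglyMeasurable
      (fun t : ℝ => t ^ (s - 1) * Real.exp (-t) / (1 - ζ ^ 2 * Real.exp (-2 * t)))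
      (volume.restrict (Ioi 0)) := by
    apply Measurable.aestronglyMeasurable
    fun_prop
  -- integrability of the target by domination
  have hint : IntegrableOn
      (fun t : ℝ => t ^ (s - 1) * Real.exp (-t) / (1 - ζ ^ 2 * Real.exp (-2 * t)))
      (Ioi 0) := by
    apply Integrable.mono' (hbase.const_mul (1 - ζ ^ 2)⁻¹) hmeas
    filter_upwards [ae_restrict_mem measurableSet_Ioi] with t ht
    have h1 : 0 < 1 - ζ ^ 2 := by linarith
    have h2 := hdenle t ht
    have ht0 : (0:ℝ) < t := ht
    have hnn : (0:ℝ) ≤ t ^ (s - 1) * Real.exp (-t) / (1 - ζ ^ 2 * Real.exp (-2 * t)) :=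
      div_nonneg (by positivity) (by linarith)
    rw [Real.norm_eq_abs, abs_of_nonneg hnn]
    rw [div_le_iff₀ (by linarith)]
    calc t ^ (s - 1) * Real.exp (-t)
        = ((1 - ζ ^ 2)⁻¹ * (Real.exp (-t) * t ^ (s - 1))) * (1 - ζ ^ 2) := by
          field_simp
      _ ≤ ((1 - ζ ^ 2)⁻¹ * (Real.exp (-t) * t ^ (s - 1))) * (1 - ζ ^ 2 * Real.exp (-2 * t)) := by
          apply mul_le_mul_of_nonneg_left h2 (by positivity)
  refine ⟨hint, ?_⟩
  -- the series of functions
  set F : ℕ → ℝ → ℝ :=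
    fun r t => ζ ^ (2 * r) * (t ^ (s - 1) * Real.exp (-((2 * (r:ℝ) + 1) * t))) with hF
  have hFb : ∀ r : ℕ, (0:ℝ) < 2 * (r:ℝ) + 1 := fun r => by positivity
  have hFint : ∀ r : ℕ, IntegrableOn (F r) (Ioi 0) := by
    intro r
    have : IntegrableOn (fun t : ℝ => t ^ (s - 1) * Real.exp (-((2 * (r:ℝ) + 1) * t)))
        (Ioi 0) := by
      apply Integrable.mono' hbase
      · apply Measurable.aestronglyMeasurable; fun_prop
      · filter_upwards [ae_restrict_mem measurableSet_Ioi] with t ht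
        have ht0 : (0:ℝ) < t := ht
        rw [Real.norm_eq_abs, abs_of_nonneg (by positivity)]
        rw [mul_comm (Real.exp (-t))]
        apply mul_le_mul_of_nonneg_left _ (by positivity)
        apply Real.exp_le_exp.mpr
        have : (0:ℝ) ≤ (r:ℝ) := Nat.cast_nonneg r
        nlinarith
    exact this.const_mul _
  have hFval : ∀ r : ℕ, (∫ t in Ioi (0:ℝ), F r t)
      = ζ ^ (2 * r) * ((1 / (2 * (r:ℝ) + 1)) ^ s * Real.Gamma s) := by
    intro r
    rw [hF]
    simp only
    rw [MeasureTheory.integral_const_mul]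
    congr 1
    exact Real.integral_rpow_mul_exp_neg_mul_Ioi hs (hFb r)
  have hFnormval : ∀ r : ℕ, (∫ t in Ioi (0:ℝ), ‖F r t‖)
      = |ζ| ^ (2 * r) * ((1 / (2 * (r:ℝ) + 1)) ^ s * Real.Gamma s) := by
    intro r
    have heq : ∀ t ∈ Ioi (0:ℝ), ‖F r t‖
        = |ζ| ^ (2 * r) * (t ^ (s - 1) * Real.exp (-((2 * (r:ℝ) + 1) * t))) := by
      intro t ht
      have ht0 : (0:ℝ) < t := ht
      have hnn : (0:ℝ) ≤ t ^ (s - 1) * Real.exp (-((2 * (r:ℝ) + 1) * t)) := by positivity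
      rw [hF]
      simp only
      rw [Real.norm_eq_abs, abs_mul, abs_pow, abs_of_nonneg hnn]
    rw [setIntegral_congr_fun measurableSet_Ioi heq, MeasureTheory.integral_const_mul]
    congr 1
    exact Real.integral_rpow_mul_exp_neg_mul_Ioi hs (hFb r)
  -- summability of the norms of the integrals
  have hsum : Summable (fun r : ℕ => ∫ t in Ioi (0:ℝ), ‖F r t‖) := by
    have h1 : Summable (fun r : ℕ => (ζ ^ 2) ^ r * Real.Gamma s) :=
      (summable_geometric_of_lt_one hζ2n hζ2).mul_right _
    have h2 : Summable (fun r : ℕ =>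
        |ζ| ^ (2 * r) * ((1 / (2 * (r:ℝ) + 1)) ^ s * Real.Gamma s)) := by
      apply Summable.of_nonneg_of_le (fun r => by positivity) _ h1
      intro r
      have hb : (1 / (2 * (r:ℝ) + 1)) ^ s ≤ 1 := by
        apply Real.rpow_le_one (by positivity) _ hs.le
        rw [div_le_one (hFb r)]
        linarith [Nat.cast_nonneg (α := ℝ) r]
      have habs : |ζ| ^ (2 * r) = (ζ ^ 2) ^ r := by
        rw [pow_mul, sq_abs]
      rw [habs]
      have h3 : (1 / (2 * (r:ℝ) + 1)) ^ s * Real.Gamma s ≤ Real.Gamma s := by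
        nlinarith [Real.rpow_nonneg (by positivity : (0:ℝ) ≤ 1 / (2 * (r:ℝ) + 1)) s]
      exact mul_le_mul_of_nonneg_left h3 (by positivity)
    exact h2.congr (fun r => (hFnormval r).symm)
  -- exchange sum and integral
  have hkey : (∑' r : ℕ, ∫ t in Ioi (0:ℝ), F r t)
      = ∫ t in Ioi (0:ℝ), ∑' r : ℕ, F r t :=
    MeasureTheory.integral_tsum_of_summable_integral_norm hFint hsum
  -- pointwise evaluation of the sum
  have hpt : ∀ t ∈ Ioi (0:ℝ), (∑' r : ℕ, F r t)
      = t ^ (s - 1) * Real.exp (-t) / (1 - ζ ^ 2 * Real.exp (-2 * t)) := by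
    intro t ht
    have ht0 : (0:ℝ) < t := ht
    have hx0 : (0:ℝ) ≤ ζ ^ 2 * Real.exp (-2 * t) := by positivity
    have hx1 : ζ ^ 2 * Real.exp (-2 * t) < 1 := hden t ht
    have hFr : ∀ r : ℕ, F r t
        = (t ^ (s - 1) * Real.exp (-t)) * (ζ ^ 2 * Real.exp (-2 * t)) ^ r := by
      intro r
      rw [hF]
      simp only
      rw [mul_pow, pow_mul, ← Real.exp_nat_mul]
      rw [show -((2 * (r:ℝ) + 1) * t) = -t + (r:ℝ) * (-2 * t) by ring, Real.exp_add]
      ring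
    rw [tsum_congr hFr, tsum_mul_left, tsum_geometric_of_lt_one hx0 hx1]
    rw [div_eq_mul_inv]
  have hInt_eq : (∫ t in Ioi (0:ℝ),
        t ^ (s - 1) * Real.exp (-t) / (1 - ζ ^ 2 * Real.exp (-2 * t)))
      = ∑' r : ℕ, ζ ^ (2 * r) * ((1 / (2 * (r:ℝ) + 1)) ^ s * Real.Gamma s) := by
    rw [← setIntegral_congr_fun measurableSet_Ioi hpt, ← hkey]
    exact tsum_congr hFval
  -- conclude
  rw [hInt_eq, legendreChi, ← tsum_mul_left]
  apply tsum_congr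
  intro r
  have h1 : (1 / (2 * (r:ℝ) + 1)) ^ s = ((2 * (r:ℝ) + 1) ^ s)⁻¹ := by
    rw [one_div, Real.inv_rpow (hFb r).le]
  have hp : (0:ℝ) < (2 * (r:ℝ) + 1) ^ s := Real.rpow_pos_of_pos (hFb r) s
  rw [h1]
  field_simp
  ring
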